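/- arXiv:2411.18897 — 8 statements merged into one kernel-verified Lean document; each statement's English description precedes it below -/
import Mathlib

section
/- If A, B, C, D are n×n symmetric circulant ±1 matrices with A² + B² + C² + D² = 4n·I (Williamson matrices), then the 4n×4n block matrix [[A, -B, -C, -D], [B, A, D, -C], [C, -D, A, B], [D, C, -B, A]] is a Hadamard matrix of order 4n. -/
open Matrix

theorem williamson_construction (n : ℕ) [NeZero n]
    (A B C D : Matrix (ZMod n) (ZMod n) ℤ)
    (hcirc : ∀ M ∈ [A, B, C, D], ∃ v : ZMod n → ℤ, M = Matrix.circulant v)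
    (hsymm : ∀ M ∈ [A, B, C, D], Mᵀ = M)
    (hpm : ∀ M ∈ [A, B, C, D], ∀ i j, M i j = 1 ∨ M i j = -1)
    (hsum : A ^ 2 + B ^ 2 + C ^ 2 + D ^ 2 = ((4 * n : ℕ) : ℤ) • 1) :
    let H := Matrix.fromBlocks
      (Matrix.fromBlocks A (-B) B A) (Matrix.fromBlocks (-C) (-D) D (-C))
      (Matrix.fromBlocks C (-D) D C) (Matrix.fromBlocks A B (-B) A)
    (∀ i j, H i j = 1 ∨ H i j = -1) ∧ H * Hᵀ = ((4 * n : ℕ) : ℤ) • 1 := by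
  intro H
  obtain ⟨vA, hvA⟩ := hcirc A (by simp)
  obtain ⟨vB, hvB⟩ := hcirc B (by simp)
  obtain ⟨vC, hvC⟩ := hcirc C (by simp)
  obtain ⟨vD, hvD⟩ := hcirc D (by simp)
  have comm : ∀ M N : Matrix (ZMod n) (ZMod n) ℤ,
      (∃ v, M = Matrix.circulant v) → (∃ w, N = Matrix.circulant w) → M * N = N * M := by
    rintro M N ⟨v, rfl⟩ ⟨w, rfl⟩
    exact Matrix.circulant_mul_comm v w
  have hBA : B * A = A * B := comm B A ⟨vB, hvB⟩ ⟨vA, hvA⟩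
  have hCA : C * A = A * C := comm C A ⟨vC, hvC⟩ ⟨vA, hvA⟩
  have hDA : D * A = A * D := comm D A ⟨vD, hvD⟩ ⟨vA, hvA⟩
  have hCB : C * B = B * C := comm C B ⟨vC, hvC⟩ ⟨vB, hvB⟩
  have hDB : D * B = B * D := comm D B ⟨vD, hvD⟩ ⟨vB, hvB⟩
  have hDC : D * C = C * D := comm D C ⟨vD, hvD⟩ ⟨vC, hvC⟩
  have hA : Aᵀ = A := hsymm A (by simp)
  have hB : Bᵀ = B := hsymm B (by simp)
  have hC : Cᵀ = C := hsymm C (by simp)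
  have hD : Dᵀ = D := hsymm D (by simp)
  have h4 : A * A + B * B + C * C + D * D = ((4 * n : ℕ) : ℤ) • (1 : Matrix (ZMod n) (ZMod n) ℤ) := by
    simpa [pow_two] using hsum
  constructor
  · have key : ∀ M : Matrix (ZMod n) (ZMod n) ℤ,
        (∀ i j, M i j = 1 ∨ M i j = -1) → ∀ i j, (-M) i j = 1 ∨ (-M) i j = -1 := by
      intro M hM i j
      rcases hM i j with h | h <;> simp [h]
    rintro (i | i) (j | j) <;>
      rcases i with i | i <;> rcases j with j | j <;>
      simp only [H, Matrix.fromBlocks_apply₁₁, Matrix.fromBlocks_apply₁₂,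
        Matrix.fromBlocks_apply₂₁, Matrix.fromBlocks_apply₂₂] <;>
      first
        | exact hpm A (by simp) i j
        | exact hpm B (by simp) i j
        | exact hpm C (by simp) i j
        | exact hpm D (by simp) i j
        | exact key B (hpm B (by simp)) i j
        | exact key C (hpm C (by simp)) i j
        | exact key D (hpm D (by simp)) i j
  · show Matrix.fromBlocks _ _ _ _ * _ᵀ = _
    simp only [H, Matrix.fromBlocks_transpose, Matrix.transpose_neg, hA, hB, hC, hD,
      Matrix.fromBlocks_multiply, Matrix.fromBlocks_add, Matrix.neg_mul, Matrix.mul_neg,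
      neg_neg, neg_mul, mul_neg]
    have hone : (((4 * n : ℕ) : ℤ) • (1 : Matrix ((ZMod n ⊕ ZMod n) ⊕ ZMod n ⊕ ZMod n)
        ((ZMod n ⊕ ZMod n) ⊕ ZMod n ⊕ ZMod n) ℤ)) =
        Matrix.fromBlocks
          (Matrix.fromBlocks (((4*n:ℕ):ℤ) • 1) 0 0 (((4*n:ℕ):ℤ) • 1)) 0
          0 (Matrix.fromBlocks (((4*n:ℕ):ℤ) • 1) 0 0 (((4*n:ℕ):ℤ) • 1)) := by
      ext i j
      rcases i with (i | i) | (i | i) <;> rcases j with (j | j) | (j | j) <;>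
        simp only [Matrix.fromBlocks_apply₁₁, Matrix.fromBlocks_apply₁₂,
          Matrix.fromBlocks_apply₂₁, Matrix.fromBlocks_apply₂₂, Matrix.smul_apply,
          Matrix.one_apply, Matrix.zero_apply, smul_ite, smul_zero, Sum.inl.injEq,
          Sum.inr.injEq, reduceCtorEq, if_false, ite_false]
    rw [hone]
    simp only [← Matrix.fromBlocks_zero, Matrix.fromBlocks_inj, hBA, hCA, hDA, hCB, hDB, hDC]
    repeat' apply And.intro
    all_goals first
        | (rw [← h4]; abel)
        | abel
        | rfl
end

section
/- Let A, B, C, D be n×n ±1 circulant matrices with A·Aᵀ + B·Bᵀ + C·Cᵀ + D·Dᵀ = 4n·I, and let R be the n×n back-diagonal permutation matrix (ones on the anti-diagonal). Then the Goethals–Seidel array GS(A,B,C,D) = [[A, BR, CR, DR], [-BR, A, DᵀR, -CᵀR], [-CR, -DᵀR, A, BᵀR], [-DR, CᵀR, -BᵀR, A]] is a Hadamard matrix of order 4n. -/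
open Matrix

theorem goethals_seidel_construction (n : ℕ) [NeZero n]
    (A B C D : Matrix (ZMod n) (ZMod n) ℤ)
    (hcirc : ∀ M ∈ [A, B, C, D], ∃ v : ZMod n → ℤ, M = Matrix.circulant v)
    (hpm : ∀ M ∈ [A, B, C, D], ∀ i j, M i j = 1 ∨ M i j = -1)
    (hsum : A * Aᵀ + B * Bᵀ + C * Cᵀ + D * Dᵀ = ((4 * n : ℕ) : ℤ) • 1)
    (R : Matrix (ZMod n) (ZMod n) ℤ)
    (hR : ∀ i j, R i j = if i + j + 1 = 0 then 1 else 0) :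
    let GS := Matrix.fromBlocks
      (Matrix.fromBlocks A (B * R) (-(B * R)) A)
      (Matrix.fromBlocks (C * R) (D * R) (Dᵀ * R) (-(Cᵀ * R)))
      (Matrix.fromBlocks (-(C * R)) (-(Dᵀ * R)) (-(D * R)) (Cᵀ * R))
      (Matrix.fromBlocks A (Bᵀ * R) (-(Bᵀ * R)) A)
    (∀ i j, GS i j = 1 ∨ GS i j = -1) ∧ GS * GSᵀ = ((4 * n : ℕ) : ℤ) • 1 := by
  intro GS
  -- circulant witnesses
  have cA : ∃ v, A = Matrix.circulant v := hcirc A (by simp)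
  have cB : ∃ v, B = Matrix.circulant v := hcirc B (by simp)
  have cC : ∃ v, C = Matrix.circulant v := hcirc C (by simp)
  have cD : ∃ v, D = Matrix.circulant v := hcirc D (by simp)
  have hcT : ∀ {X : Matrix (ZMod n) (ZMod n) ℤ}, (∃ v, X = Matrix.circulant v) →
      (∃ v, Xᵀ = Matrix.circulant v) := by
    rintro X ⟨v, rfl⟩
    exact ⟨_, Matrix.transpose_circulant v⟩
  have hcomm : ∀ {X Y : Matrix (ZMod n) (ZMod n) ℤ}, (∃ v, X = Matrix.circulant v) →
      (∃ v, Y = Matrix.circulant v) → X * Y = Y * X := by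
    rintro X Y ⟨v, rfl⟩ ⟨w, rfl⟩
    exact Matrix.circulant_mul_comm v w
  -- R lemmas
  have mulR : ∀ (M : Matrix (ZMod n) (ZMod n) ℤ) i j, (M * R) i j = M i (-(j + 1)) := by
    intro M i j
    rw [Matrix.mul_apply]
    have : ∀ k : ZMod n, M i k * R k j = if k = -(j+1) then M i k else 0 := by
      intro k
      rw [hR]
      have : (k + j + 1 = 0) ↔ (k = -(j+1)) := by
        constructor <;> intro h <;> linear_combination h
      simp [this, mul_ite]
    simp only [this]
    simp
  have Rmul : ∀ (M : Matrix (ZMod n) (ZMod n) ℤ) i j, (R * M) i j = M (-(i + 1)) j := by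
    intro M i j
    rw [Matrix.mul_apply]
    have : ∀ k : ZMod n, R i k * M k j = if k = -(i+1) then M k j else 0 := by
      intro k
      rw [hR]
      have : (i + k + 1 = 0) ↔ (k = -(i+1)) := by
        constructor <;> intro h <;> linear_combination h
      simp [this, ite_mul]
    simp only [this]
    simp
  have hRsym : Rᵀ = R := by
    ext i j
    rw [Matrix.transpose_apply, hR, hR]
    congr 1
    simp only [eq_iff_iff]
    constructor <;> intro h <;> linear_combination h
  have hRR : R * R = 1 := by
    ext i j
    rw [Rmul, hR, Matrix.one_apply]
    congr 1
    simp only [eq_iff_iff]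
    constructor <;> intro h
    · have : (j : ZMod n) = i := by linear_combination h
      exact this.symm
    · subst h; ring
  have hRX : ∀ {X : Matrix (ZMod n) (ZMod n) ℤ}, (∃ v, X = Matrix.circulant v) →
      R * Xᵀ = X * R := by
    rintro X ⟨v, rfl⟩
    ext i j
    rw [Rmul, mulR, Matrix.transpose_apply, Matrix.circulant_apply, Matrix.circulant_apply]
    congr 1
    ring
  -- key multiplication lemmas
  have l1 : ∀ X Y : Matrix (ZMod n) (ZMod n) ℤ, (X * R) * (Y * R)ᵀ = X * Yᵀ := by
    intro X Y
    rw [Matrix.transpose_mul, hRsym, Matrix.mul_assoc X R, ← Matrix.mul_assoc R R, hRR, one_mul]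
  have l2 : ∀ (X : Matrix (ZMod n) (ZMod n) ℤ) {Y}, (∃ v, Y = Matrix.circulant v) →
      X * (Y * R)ᵀ = (X * Y) * R := by
    intro X Y hY
    rw [Matrix.transpose_mul, hRsym, hRX hY, ← Matrix.mul_assoc]
  have l3 : ∀ {X : Matrix (ZMod n) (ZMod n) ℤ} (Y), (∃ v, X = Matrix.circulant v) →
      (Y * R) * Xᵀ = (Y * X) * R := by
    intro X Y hX
    rw [Matrix.mul_assoc, hRX hX, ← Matrix.mul_assoc]
  constructor
  · -- entries are ±1
    have pA := hpm A (by simp)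
    have pB := hpm B (by simp)
    have pC := hpm C (by simp)
    have pD := hpm D (by simp)
    have pR : ∀ {X : Matrix (ZMod n) (ZMod n) ℤ}, (∀ i j, X i j = 1 ∨ X i j = -1) →
        ∀ i j, (X * R) i j = 1 ∨ (X * R) i j = -1 := by
      intro X hX i j
      rw [mulR]
      exact hX _ _
    have pT : ∀ {X : Matrix (ZMod n) (ZMod n) ℤ}, (∀ i j, X i j = 1 ∨ X i j = -1) →
        ∀ i j, Xᵀ i j = 1 ∨ Xᵀ i j = -1 := fun hX i j => hX j i
    have pN : ∀ {X : Matrix (ZMod n) (ZMod n) ℤ}, (∀ i j, X i j = 1 ∨ X i j = -1) →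
        ∀ i j, (-X) i j = 1 ∨ (-X) i j = -1 := by
      intro X hX i j
      rcases hX i j with h | h <;> simp [h]
    rintro ((i | i) | (i | i)) ((j | j) | (j | j)) <;>
      simp only [GS, Matrix.fromBlocks_apply₁₁, Matrix.fromBlocks_apply₁₂,
        Matrix.fromBlocks_apply₂₁, Matrix.fromBlocks_apply₂₂] <;>
      first
        | exact pA i j | exact pB i j | exact pC i j | exact pD i j
        | exact pR pA i j | exact pR pB i j | exact pR pC i j | exact pR pD i j
        | exact pR (pT pB) i j | exact pR (pT pC) i j | exact pR (pT pD) i j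
        | exact pN (pR pB) i j | exact pN (pR pC) i j | exact pN (pR pD) i j
        | exact pN (pR (pT pB)) i j | exact pN (pR (pT pC)) i j | exact pN (pR (pT pD)) i j
  · -- product
    show GS * GSᵀ = _
    have h1 : (1 : Matrix (ZMod n ⊕ ZMod n) (ZMod n ⊕ ZMod n) ℤ) =
        Matrix.fromBlocks 1 0 0 1 := Matrix.fromBlocks_one.symm
    have h2 : (1 : Matrix ((ZMod n ⊕ ZMod n) ⊕ (ZMod n ⊕ ZMod n))
        ((ZMod n ⊕ ZMod n) ⊕ (ZMod n ⊕ ZMod n)) ℤ) =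
        Matrix.fromBlocks 1 0 0 1 := Matrix.fromBlocks_one.symm
    rw [h2, h1]
    simp only [GS, Matrix.fromBlocks_transpose, Matrix.transpose_neg, Matrix.fromBlocks_multiply,
      Matrix.fromBlocks_add, Matrix.fromBlocks_smul, Matrix.mul_neg, Matrix.neg_mul,
      Matrix.transpose_transpose, neg_neg, smul_zero]
    -- specialized rewriting lemmas
    have eAB : A * (B * R)ᵀ = A * B * R := l2 A cB
    have eAC : A * (C * R)ᵀ = A * C * R := l2 A cC
    have eAD : A * (D * R)ᵀ = A * D * R := l2 A cD
    have eABt : A * (Bᵀ * R)ᵀ = A * Bᵀ * R := l2 A (hcT cB)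
    have eACt : A * (Cᵀ * R)ᵀ = A * Cᵀ * R := l2 A (hcT cC)
    have eADt : A * (Dᵀ * R)ᵀ = A * Dᵀ * R := l2 A (hcT cD)
    have l3A : ∀ Y : Matrix (ZMod n) (ZMod n) ℤ, Y * R * Aᵀ = Y * A * R := fun Y => l3 Y cA
    have cBA : B * A = A * B := hcomm cB cA
    have cCA : C * A = A * C := hcomm cC cA
    have cDA : D * A = A * D := hcomm cD cA
    have cCB : C * B = B * C := hcomm cC cB
    have cDB : D * B = B * D := hcomm cD cB
    have cDC : D * C = C * D := hcomm cD cC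
    have cBtA : Bᵀ * A = A * Bᵀ := hcomm (hcT cB) cA
    have cCtA : Cᵀ * A = A * Cᵀ := hcomm (hcT cC) cA
    have cDtA : Dᵀ * A = A * Dᵀ := hcomm (hcT cD) cA
    have cCtB : Cᵀ * B = B * Cᵀ := hcomm (hcT cC) cB
    have cDtB : Dᵀ * B = B * Dᵀ := hcomm (hcT cD) cB
    have cBtC : Bᵀ * C = C * Bᵀ := hcomm (hcT cB) cC
    have cDtC : Dᵀ * C = C * Dᵀ := hcomm (hcT cD) cC
    have cBtD : Bᵀ * D = D * Bᵀ := hcomm (hcT cB) cD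
    have cCtD : Cᵀ * D = D * Cᵀ := hcomm (hcT cC) cD
    have cDtCt : Dᵀ * Cᵀ = Cᵀ * Dᵀ := hcomm (hcT cD) (hcT cC)
    have cCtBt : Cᵀ * Bᵀ = Bᵀ * Cᵀ := hcomm (hcT cC) (hcT cB)
    have cDtBt : Dᵀ * Bᵀ = Bᵀ * Dᵀ := hcomm (hcT cD) (hcT cB)
    have cBtB : Bᵀ * B = B * Bᵀ := hcomm (hcT cB) cB
    have cCtC : Cᵀ * C = C * Cᵀ := hcomm (hcT cC) cC
    have cDtD : Dᵀ * D = D * Dᵀ := hcomm (hcT cD) cD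
    have hz : (0 : Matrix (ZMod n ⊕ ZMod n) (ZMod n ⊕ ZMod n) ℤ) =
        Matrix.fromBlocks 0 0 0 0 := (Matrix.fromBlocks_zero).symm
    refine Matrix.fromBlocks_inj.mpr ⟨?_, ?_, ?_, ?_⟩ <;>
      try rw [hz]
    all_goals refine Matrix.fromBlocks_inj.mpr ⟨?_, ?_, ?_, ?_⟩
    all_goals
      simp only [l1, Matrix.transpose_transpose, eAB, eAC, eAD, eABt, eACt, eADt, l3A,
        cBA, cCA, cDA, cCB, cDB, cDC, cBtA, cCtA, cDtA, cCtB, cDtB, cBtC, cDtC, cBtD, cCtD,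
        cDtCt, cCtBt, cDtBt, cBtB, cCtC, cDtD]
    all_goals try abel
    all_goals rw [← hsum]
    all_goals abel
end

section
/- If A, B, C, D are ±1 matrices of odd order n with M·Nᵀ = N·Mᵀ for all M, N ∈ {A,B,C,D}, (A-I)ᵀ = -(A-I), Bᵀ = B, Cᵀ = C, Dᵀ = D, and A·Aᵀ + B·Bᵀ + C·Cᵀ + D·Dᵀ = 4n·I (good matrices), then the block matrix [[A, B, C, D], [-B, A, D, -C], [-C, -D, A, B], [-D, C, -B, A]] is a skew Hadamard matrix of order 4n. -/
open Matrix

theorem good_matrices_construction (n : ℕ) (hodd : Odd n)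
    (A B C D : Matrix (Fin n) (Fin n) ℤ)
    (hpm : ∀ M ∈ [A, B, C, D], ∀ i j, M i j = 1 ∨ M i j = -1)
    (hamic : ∀ M ∈ [A, B, C, D], ∀ N ∈ [A, B, C, D], M * Nᵀ = N * Mᵀ)
    (hAskew : (A - 1)ᵀ = -(A - 1))
    (hB : Bᵀ = B) (hC : Cᵀ = C) (hD : Dᵀ = D)
    (hsum : A * Aᵀ + B * Bᵀ + C * Cᵀ + D * Dᵀ = ((4 * n : ℕ) : ℤ) • 1) :
    let H := Matrix.fromBlocks
      (Matrix.fromBlocks A B (-B) A) (Matrix.fromBlocks C D D (-C))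
      (Matrix.fromBlocks (-C) (-D) (-D) C) (Matrix.fromBlocks A B (-B) A)
    (∀ i j, H i j = 1 ∨ H i j = -1) ∧
    H * Hᵀ = ((4 * n : ℕ) : ℤ) • 1 ∧
    (H - 1)ᵀ = -(H - 1) := by
  intro H
  have hA := hpm A (by simp)
  have hBpm := hpm B (by simp)
  have hCpm := hpm C (by simp)
  have hDpm := hpm D (by simp)
  have hAB := hamic A (by simp) B (by simp)
  have hAC := hamic A (by simp) C (by simp)
  have hAD := hamic A (by simp) D (by simp)
  have hBC := hamic B (by simp) C (by simp)
  have hBD := hamic B (by simp) D (by simp)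
  have hCD := hamic C (by simp) D (by simp)
  simp only [hB, hC, hD] at hAB hAC hAD hBC hBD hCD hsum
  refine ⟨?_, ?_, ?_⟩
  · rintro ((i | i) | (i | i)) ((j | j) | (j | j)) <;>
      simp only [H, fromBlocks_apply₁₁, fromBlocks_apply₁₂, fromBlocks_apply₂₁,
        fromBlocks_apply₂₂, neg_apply] <;>
      first
        | exact hA i j | exact hBpm i j | exact hCpm i j | exact hDpm i j
        | (rcases hBpm i j with h | h <;> rw [h] <;> simp)
        | (rcases hCpm i j with h | h <;> rw [h] <;> simp)
        | (rcases hDpm i j with h | h <;> rw [h] <;> simp)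
  · show _ = ((4 * n : ℕ) : ℤ) • (1 : Matrix _ _ ℤ)
    rw [show (1 : Matrix ((Fin n ⊕ Fin n) ⊕ Fin n ⊕ Fin n) _ ℤ) =
        fromBlocks (fromBlocks 1 0 0 1) (fromBlocks 0 0 0 0)
          (fromBlocks 0 0 0 0) (fromBlocks 1 0 0 1) by
        rw [fromBlocks_zero, fromBlocks_one, fromBlocks_one]]
    simp only [H, fromBlocks_transpose, fromBlocks_multiply, transpose_neg, hB, hC, hD,
      Matrix.neg_mul, Matrix.mul_neg, neg_neg, fromBlocks_smul, smul_zero,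
      fromBlocks_add, neg_smul, one_smul]
    simp only [fromBlocks_inj]
    and_intros <;>
      first
        | (rw [← hsum]; abel)
        | (simp only [hAB, hAC, hAD, hBC, hBD, hCD]; abel)
        | abel
  · have hAt : Aᵀ = 1 - A + 1 := by
      have h := hAskew
      rw [transpose_sub, transpose_one, neg_sub] at h
      exact sub_eq_iff_eq_add.mp h
    rw [transpose_sub, transpose_one, neg_sub, sub_eq_iff_eq_add]
    rw [show (1 : Matrix ((Fin n ⊕ Fin n) ⊕ Fin n ⊕ Fin n) _ ℤ) =
        fromBlocks (fromBlocks 1 0 0 1) (fromBlocks 0 0 0 0)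
          (fromBlocks 0 0 0 0) (fromBlocks 1 0 0 1) by
        rw [fromBlocks_zero, fromBlocks_one, fromBlocks_one]]
    simp only [H, fromBlocks_transpose, transpose_neg, hB, hC, hD, hAt,
      sub_eq_add_neg, fromBlocks_neg, fromBlocks_add]
    simp only [fromBlocks_inj]
    and_intros <;> first | exact trivial | abel
end

section
/- If four (0, ±1)-sequences A, B, C, D of length n are T-sequences (exactly one of the four is nonzero at each position, and the sum of their non-periodic autocorrelations vanishes for all j ≥ 1), then the four circulant matrices X₁, X₂, X₃, X₄ whose first rows are A, B, C, D respectively satisfy Σᵢ Xᵢ·Xᵢᵀ = n·I. -/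
open Finset

lemma zmod_sum_range (n : ℕ) [NeZero n] (g : ZMod n → ℤ) :
    ∑ t : ZMod n, g t = ∑ i ∈ Finset.range n, g (i : ZMod n) := by
  apply Finset.sum_nbij' (i := fun t => (ZMod.val t : ℕ)) (j := fun i => ((i : ZMod n)))
  · intro a _; exact Finset.mem_range.mpr (ZMod.val_lt a)
  · intro a _; exact Finset.mem_univ _
  · intro a _; exact ZMod.natCast_zmod_val a
  · intro a ha; exact ZMod.val_cast_of_lt (Finset.mem_range.mp ha)
  · intro a _; rw [ZMod.natCast_zmod_val]

lemma sum_shift (n : ℕ) [NeZero n] (f : ZMod n → ℤ) (e : ZMod n) (he : e ≠ 0) :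
    ∑ t : ZMod n, f t * f (t + e)
      = (∑ i ∈ Finset.range (n - e.val), f (i : ZMod n) * f ((i + e.val : ℕ) : ZMod n)) +
        (∑ i ∈ Finset.range (n - (n - e.val)),
          f (i : ZMod n) * f ((i + (n - e.val) : ℕ) : ZMod n)) := by
  set j := e.val with hj
  have hjn : j < n := ZMod.val_lt e
  have hj1 : 1 ≤ j := Nat.one_le_iff_ne_zero.mpr
    (fun h0 => he (by rw [← ZMod.natCast_zmod_val e, ← hj, h0, Nat.cast_zero]))
  have hje : ((j : ℕ) : ZMod n) = e := ZMod.natCast_zmod_val e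
  rw [zmod_sum_range]
  have h1 : ∀ i : ℕ, ((i : ZMod n) + e) = ((i + j : ℕ) : ZMod n) := by
    intro i; rw [Nat.cast_add, hje]
  simp_rw [h1]
  rw [Finset.range_eq_Ico, Finset.range_eq_Ico, Finset.range_eq_Ico, ← Finset.sum_Ico_consecutive _ (Nat.zero_le (n - j)) (Nat.sub_le n j)]
  congr 1
  rw [Finset.sum_Ico_eq_sum_range, ← Finset.range_eq_Ico]
  have hnn : n - (n - j) = j := Nat.sub_sub_self (le_of_lt hjn)
  apply Finset.sum_congr rfl
  intro t ht
  have ht' : t < j := by rw [Finset.mem_range, hnn] at ht; exact ht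
  have e1 : ((n - j + t : ℕ) : ZMod n) = ((t + (n - j) : ℕ) : ZMod n) := by
    rw [Nat.add_comm]
  have e2 : ((n - j + t + j : ℕ) : ZMod n) = ((t : ℕ) : ZMod n) := by
    have h5 : n - j + t + j = t + n := by omega
    rw [h5, Nat.cast_add, ZMod.natCast_self, add_zero]
  rw [e1, e2, mul_comm]

open Matrix

theorem t_sequences_give_t_matrices (n : ℕ) (hn : 0 < n) [NeZero n]
    (A B C D : ZMod n → ℤ)
    (hval : ∀ X ∈ [A, B, C, D], ∀ i, X i = 0 ∨ X i = 1 ∨ X i = -1)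
    (hone : ∀ i : ZMod n,
      (A i ≠ 0 ∧ B i = 0 ∧ C i = 0 ∧ D i = 0) ∨
      (A i = 0 ∧ B i ≠ 0 ∧ C i = 0 ∧ D i = 0) ∨
      (A i = 0 ∧ B i = 0 ∧ C i ≠ 0 ∧ D i = 0) ∨
      (A i = 0 ∧ B i = 0 ∧ C i = 0 ∧ D i ≠ 0))
    (hnpaf : ∀ j : ℕ, 1 ≤ j →
      (∑ i ∈ Finset.range (n - j), A (i : ZMod n) * A ((i + j : ℕ) : ZMod n)) +
      (∑ i ∈ Finset.range (n - j), B (i : ZMod n) * B ((i + j : ℕ) : ZMod n)) +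
      (∑ i ∈ Finset.range (n - j), C (i : ZMod n) * C ((i + j : ℕ) : ZMod n)) +
      (∑ i ∈ Finset.range (n - j), D (i : ZMod n) * D ((i + j : ℕ) : ZMod n)) = 0) :
    let X₁ : Matrix (ZMod n) (ZMod n) ℤ := fun i j => A (j - i)
    let X₂ : Matrix (ZMod n) (ZMod n) ℤ := fun i j => B (j - i)
    let X₃ : Matrix (ZMod n) (ZMod n) ℤ := fun i j => C (j - i)
    let X₄ : Matrix (ZMod n) (ZMod n) ℤ := fun i j => D (j - i)
    X₁ * X₁ᵀ + X₂ * X₂ᵀ + X₃ * X₃ᵀ + X₄ * X₄ᵀ = (n : ℤ) • 1 := by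
  intro X₁ X₂ X₃ X₄
  ext i k
  simp only [Matrix.add_apply, Matrix.mul_apply, Matrix.transpose_apply, Matrix.smul_apply,
    Matrix.one_apply, smul_eq_mul]
  simp only [X₁, X₂, X₃, X₄]
  have reidx : ∀ f : ZMod n → ℤ,
      (∑ x : ZMod n, f (x - i) * f (x - k)) = ∑ t : ZMod n, f t * f (t + (i - k)) := by
    intro f
    apply Fintype.sum_equiv (Equiv.subRight i)
    intro x
    simp only [Equiv.subRight_apply]
    congr 2
    ring
  rw [reidx A, reidx B, reidx C, reidx D]
  by_cases hik : i = k
  · subst hik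
    simp only [if_pos rfl, mul_one, sub_self, add_zero]
    rw [← Finset.sum_add_distrib, ← Finset.sum_add_distrib, ← Finset.sum_add_distrib]
    have h1 : ∀ t : ZMod n, A t * A t + B t * B t + C t * C t + D t * D t = 1 := by
      intro t
      have hA := hval A (by simp) t
      have hB := hval B (by simp) t
      have hC := hval C (by simp) t
      have hD := hval D (by simp) t
      rcases hone t with ⟨h, b0, c0, d0⟩ | ⟨a0, h, c0, d0⟩ | ⟨a0, b0, h, d0⟩ | ⟨a0, b0, c0, h⟩ <;>
        [(rcases hA with h' | h' | h'); (rcases hB with h' | h' | h');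
         (rcases hC with h' | h' | h'); (rcases hD with h' | h' | h')] <;>
        first | (exact absurd h' h) | simp_all
    simp_rw [h1]
    simp [ZMod.card]
  · rw [if_neg hik, mul_zero]
    set e : ZMod n := i - k with hedef
    have he : e ≠ 0 := sub_ne_zero.mpr hik
    rw [sum_shift n A e he, sum_shift n B e he, sum_shift n C e he, sum_shift n D e he]
    have hv1 : 1 ≤ e.val := Nat.one_le_iff_ne_zero.mpr (fun h0 => he (by
      rw [← ZMod.natCast_zmod_val e, h0, Nat.cast_zero]))
    have hv2 : 1 ≤ n - e.val := by have := ZMod.val_lt e; omega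
    have H1 := hnpaf e.val hv1
    have H2 := hnpaf (n - e.val) hv2
    linarith
end

section
/- The number 509203 is a Riesel number: for every m ≥ 1, the number 2^m · 509203 - 1 is divisible by at least one prime in {3, 5, 7, 13, 17, 241}, and in particular is composite. -/
lemma riesel_key (p m : ℕ) (hp : p ∣ 2 ^ 24 - 1) :
    2 ^ m * 509203 ≡ 2 ^ (m % 24) * 509203 [MOD p] := by
  conv_lhs => rw [← Nat.div_add_mod m 24]
  rw [pow_add, pow_mul, mul_assoc]
  have h : (2 : ℕ) ^ 24 ≡ 1 [MOD p] :=
    ((Nat.modEq_iff_dvd' (by norm_num)).2 hp).symm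
  calc ((2:ℕ) ^ 24) ^ (m / 24) * (2 ^ (m % 24) * 509203)
      ≡ 1 ^ (m / 24) * (2 ^ (m % 24) * 509203) [MOD p] :=
        Nat.ModEq.mul_right _ (h.pow _)
    _ = 2 ^ (m % 24) * 509203 := by rw [one_pow, one_mul]

theorem riesel_509203 (m : ℕ) (hm : 1 ≤ m) :
    (∃ p ∈ ({3, 5, 7, 13, 17, 241} : Finset ℕ), p ∣ 2 ^ m * 509203 - 1) ∧
    1 < 2 ^ m * 509203 - 1 ∧ ¬ Nat.Prime (2 ^ m * 509203 - 1) := by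
  have hN : 1018406 ≤ 2 ^ m * 509203 := by
    calc 1018406 = 2 ^ 1 * 509203 := by norm_num
    _ ≤ 2 ^ m * 509203 := by
      apply Nat.mul_le_mul_right
      exact Nat.pow_le_pow_right (by norm_num) hm
  obtain ⟨p, hpmem, hpdvd⟩ :
      ∃ p ∈ ({3, 5, 7, 13, 17, 241} : Finset ℕ), p ∣ 2 ^ m * 509203 - 1 := by
    have cover : ∃ p ∈ ({3, 5, 7, 13, 17, 241} : Finset ℕ),
        p ∣ 2 ^ 24 - 1 ∧ 1 ≡ 2 ^ (m % 24) * 509203 [MOD p] := by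
      have h24 : m % 24 < 24 := Nat.mod_lt _ (by norm_num)
      set r := m % 24 with hr
      clear_value r
      interval_cases r <;>
      · first
        | exact ⟨3, by decide, by decide, by decide⟩
        | exact ⟨5, by decide, by decide, by decide⟩
        | exact ⟨7, by decide, by decide, by decide⟩
        | exact ⟨13, by decide, by decide, by decide⟩
        | exact ⟨17, by decide, by decide, by decide⟩
        | exact ⟨241, by decide, by decide, by decide⟩
    obtain ⟨p, hpm, hp24, hp1⟩ := cover
    refine ⟨p, hpm, (Nat.modEq_iff_dvd' (by omega)).1 ?_⟩
    exact hp1.trans (riesel_key p m hp24).symm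
  have hp_le : p ≤ 241 := by fin_cases hpmem <;> norm_num
  have hp_prime : Nat.Prime p := by fin_cases hpmem <;> norm_num
  refine ⟨⟨p, hpmem, hpdvd⟩, by omega, fun hNp => ?_⟩
  rcases (Nat.Prime.eq_one_or_self_of_dvd hNp p hpdvd) with h1 | h2
  · exact hp_prime.one_lt.ne' h1
  · omega
end

section
/- For every m ≥ 1 and every prime p and integer t ≥ 1, we have 2^m · 509203 - 1 ≠ p^t. That is, 2^m·509203 - 1 is never a prime power. -/
private lemma pow_period {R : Type*} [Monoid R] (x : R) (A : ℕ) (hx : x ^ A = 1)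
    (m : ℕ) : x ^ m = x ^ (m % A) := by
  conv_lhs => rw [← Nat.div_add_mod m A]
  rw [pow_add, pow_mul, hx, one_pow, one_mul]

private lemma cast_N (M : ℕ) (m : ℕ) :
    ((2 ^ m * 509203 - 1 : ℕ) : ZMod M) = (2 : ZMod M) ^ m * 509203 - 1 := by
  have h1 : 1 ≤ 2 ^ m * 509203 :=
    Nat.one_le_iff_ne_zero.mpr (by positivity)
  push_cast [Nat.cast_sub h1]
  ring

private lemma dvd_of_zmod (q : ℕ) (m : ℕ) (h24 : (2 : ZMod q) ^ 24 = 1)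
    (h : (2 : ZMod q) ^ (m % 24) * 509203 - 1 = 0) :
    q ∣ 2 ^ m * 509203 - 1 := by
  have := (ZMod.natCast_eq_zero_iff (2 ^ m * 509203 - 1) q).mp ?_
  · exact this
  · rw [cast_N, pow_period (2 : ZMod q) 24 h24 m, h]

private lemma crux (M A B : ℕ) (q : ℕ) (hA : 0 < A) (hB : 0 < B)
    (h2 : (2 : ZMod M) ^ A = 1) (hq : (q : ZMod M) ^ B = 1)
    (H : ∀ r < A, ∀ u < B, (2 : ZMod M) ^ r * 509203 - 1 ≠ (q : ZMod M) ^ (u + 1))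
    (m t : ℕ) (ht : 1 ≤ t) : 2 ^ m * 509203 - 1 ≠ q ^ t := by
  intro h
  have hz : ((2 ^ m * 509203 - 1 : ℕ) : ZMod M) = ((q ^ t : ℕ) : ZMod M) := by rw [h]
  rw [cast_N] at hz
  push_cast at hz
  rw [pow_period (2 : ZMod M) A h2 m] at hz
  have htd : t = (t - 1) % B + 1 + B * ((t - 1) / B) := by
    have := Nat.div_add_mod (t - 1) B; omega
  rw [htd, pow_add, pow_mul, hq, one_pow, mul_one] at hz
  exact H (m % A) (Nat.mod_lt _ hA) ((t - 1) % B) (Nat.mod_lt _ hB) hz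

private lemma cover (m : ℕ) :
    3 ∣ 2 ^ m * 509203 - 1 ∨ 5 ∣ 2 ^ m * 509203 - 1 ∨ 7 ∣ 2 ^ m * 509203 - 1 ∨
    13 ∣ 2 ^ m * 509203 - 1 ∨ 17 ∣ 2 ^ m * 509203 - 1 ∨ 241 ∣ 2 ^ m * 509203 - 1 := by
  have key : ∀ r < 24,
      (2 : ZMod 3) ^ r * 509203 - 1 = 0 ∨ (2 : ZMod 5) ^ r * 509203 - 1 = 0 ∨
      (2 : ZMod 7) ^ r * 509203 - 1 = 0 ∨ (2 : ZMod 13) ^ r * 509203 - 1 = 0 ∨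
      (2 : ZMod 17) ^ r * 509203 - 1 = 0 ∨ (2 : ZMod 241) ^ r * 509203 - 1 = 0 := by
    decide
  rcases key (m % 24) (Nat.mod_lt _ (by norm_num)) with h | h | h | h | h | h
  · exact Or.inl (dvd_of_zmod 3 m (by decide) h)
  · exact Or.inr (Or.inl (dvd_of_zmod 5 m (by decide) h))
  · exact Or.inr (Or.inr (Or.inl (dvd_of_zmod 7 m (by decide) h)))
  · exact Or.inr (Or.inr (Or.inr (Or.inl (dvd_of_zmod 13 m (by decide) h))))
  · exact Or.inr (Or.inr (Or.inr (Or.inr (Or.inl (dvd_of_zmod 17 m (by decide) h)))))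
  · exact Or.inr (Or.inr (Or.inr (Or.inr (Or.inr (dvd_of_zmod 241 m (by decide) h)))))

theorem riesel_509203_not_prime_power (m : ℕ) (hm : 1 ≤ m)
    (p : ℕ) (hp : Nat.Prime p) (t : ℕ) (ht : 1 ≤ t) :
    2 ^ m * 509203 - 1 ≠ p ^ t := by
  intro h
  have peq : ∀ q : ℕ, Nat.Prime q → q ∣ 2 ^ m * 509203 - 1 → p = q := by
    intro q hq hd
    rw [h] at hd
    exact ((Nat.prime_dvd_prime_iff_eq hq hp).mp (hq.dvd_of_dvd_pow hd)).symm
  rcases cover m with hd | hd | hd | hd | hd | hd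
  · have := peq 3 (by norm_num) hd; subst this
    exact crux 85 8 16 3 (by norm_num) (by norm_num) (by decide) (by decide) (by decide) m t ht h
  · have := peq 5 (by norm_num) hd; subst this
    exact crux 31 5 3 5 (by norm_num) (by norm_num) (by decide) (by decide) (by decide) m t ht h
  · have := peq 7 (by norm_num) hd; subst this
    exact crux 57 18 3 7 (by norm_num) (by norm_num) (by decide) (by decide) (by decide) m t ht h
  · have := peq 13 (by norm_num) hd; subst this
    exact crux 105 12 4 13 (by norm_num) (by norm_num) (by decide) (by decide) (by decide) m t ht h
  · have := peq 17 (by norm_num) hd; subst this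
    exact crux 15 4 4 17 (by norm_num) (by norm_num) (by decide) (by decide) (by decide) m t ht h
  · have := peq 241 (by norm_num) hd; subst this
    exact crux 15 4 1 241 (by norm_num) (by norm_num) (by decide) (by decide) (by decide) m t ht h
end

section
/- For every m ≥ 1, the congruence 2^m · 509203 - 1 ≡ 3^t (mod 85) has no solution with 2^m·509203 - 1 divisible by 3; more precisely, there is no pair (m, t) with 3 ∣ 2^m·509203 - 1 and 2^m·509203 - 1 ≡ 3^t (mod 85). -/
lemma pow_mod_period (a d n m : ℕ) (h : a ^ d % n = 1 % n) :
    a ^ m % n = a ^ (m % d) % n := by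
  conv_lhs => rw [← Nat.div_add_mod m d]
  rw [pow_add, Nat.mul_mod, pow_mul, Nat.pow_mod, h, ← Nat.pow_mod, one_pow,
    ← Nat.mul_mod, one_mul]

theorem riesel_509203_mod_85_case_three :
    ¬ ∃ (m t : ℕ), 1 ≤ m ∧ 3 ∣ 2 ^ m * 509203 - 1 ∧
      (2 ^ m * 509203 - 1) % 85 = 3 ^ t % 85 := by
  rintro ⟨m, t, -, hdvd, heq⟩
  have h2 : (2:ℕ) ^ m % 3 = 2 ^ (m % 2) % 3 := pow_mod_period 2 2 3 m (by norm_num)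
  have h85 : (2:ℕ) ^ m % 85 = 2 ^ (m % 8) % 85 := pow_mod_period 2 8 85 m (by norm_num)
  have h3 : (3:ℕ) ^ t % 85 = 3 ^ (t % 16) % 85 := pow_mod_period 3 16 85 t (by norm_num)
  have ha3 : (2 ^ m * 509203) % 3 = (2 ^ (m % 2) % 3 * 1) % 3 := by
    rw [Nat.mul_mod, h2]
  have ha85 : (2 ^ m * 509203) % 85 = (2 ^ (m % 8) % 85 * 53) % 85 := by
    rw [Nat.mul_mod, h85]
  have hpos : 1 ≤ 2 ^ m * 509203 := Nat.one_le_iff_ne_zero.mpr (by positivity)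
  obtain ⟨a, ha⟩ : ∃ a, 2 ^ m * 509203 = a := ⟨_, rfl⟩
  rw [ha] at hdvd heq ha3 ha85 hpos
  rw [h3] at heq
  clear h2 h85 h3 ha
  -- m is even
  have hm2 : m % 2 = 0 := by
    rcases Nat.mod_two_eq_zero_or_one m with h | h
    · exact h
    · rw [h] at ha3; norm_num at ha3; omega
  obtain ⟨r, hrm⟩ : ∃ r, m % 8 = r := ⟨_, rfl⟩
  obtain ⟨s, hsm⟩ : ∃ s, t % 16 = s := ⟨_, rfl⟩
  rw [hrm] at ha85
  rw [hsm] at heq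
  have hr : r < 8 := hrm ▸ Nat.mod_lt _ (by norm_num)
  have hs : s < 16 := hsm ▸ Nat.mod_lt _ (by norm_num)
  have hr2 : r % 2 = 0 := by omega
  clear hrm hsm hm2
  interval_cases r <;> interval_cases s <;> simp_all <;> omega
end

section
/- If S₁, S₂, S₃, S₄ are supplementary difference sets in ℤ/nℤ with parameters 4-{n; k₁, k₂, k₃, k₄; λ} where λ = k₁+k₂+k₃+k₄ - n, and Aᵢ is the circulant ±1 matrix whose first row has entry -1 at positions in Sᵢ and +1 elsewhere, then A₁·A₁ᵀ + A₂·A₂ᵀ + A₃·A₃ᵀ + A₄·A₄ᵀ = 4n·I. -/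
open Matrix Finset

variable {n : ℕ} [NeZero n]

private lemma count_both (S : Finset (ZMod n)) (j l : ZMod n) :
    (Finset.univ.filter (fun m => m - j ∈ S ∧ m - l ∈ S)).card =
      ((S ×ˢ S).filter (fun p => p.1 - p.2 = l - j)).card := by
  apply Finset.card_bij (fun m _ => (m - j, m - l))
  · intro m hm
    simp only [Finset.mem_filter, Finset.mem_univ, true_and] at hm
    simp only [Finset.mem_filter, Finset.mem_product]
    refine ⟨⟨hm.1, hm.2⟩, by ring⟩
  · intro a ha b hb h
    have := congrArg Prod.fst h
    simp only at this
    exact sub_left_injective this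
  · intro p hp
    simp only [Finset.mem_filter, Finset.mem_product] at hp
    refine ⟨p.1 + j, ?_, ?_⟩
    · simp only [Finset.mem_filter, Finset.mem_univ, true_and, add_sub_cancel_right]
      refine ⟨hp.1.1, ?_⟩
      have : p.1 + j - l = p.2 := by
        have := hp.2
        linear_combination this
      rw [this]; exact hp.1.2
    · have : p.1 + j - l = p.2 := by linear_combination hp.2
      simp [this]
  
private lemma count_one (S : Finset (ZMod n)) (j : ZMod n) :
    (Finset.univ.filter (fun m => m - j ∈ S)).card = S.card := by
  apply Finset.card_bij (fun m _ => m - j)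
  · intro m hm; simpa using hm
  · intro a _ b _ h; exact sub_left_injective h
  · intro r hr; exact ⟨r + j, by simpa using hr, by ring⟩

private lemma entry_eq (S : Finset (ZMod n)) (A : Matrix (ZMod n) (ZMod n) ℤ)
    (hA : ∀ j l, A j l = if l - j ∈ S then -1 else 1) (j l : ZMod n) :
    (A * Aᵀ) j l = (n : ℤ) - 4 * S.card +
      4 * ((S ×ˢ S).filter (fun p => p.1 - p.2 = l - j)).card := by
  rw [Matrix.mul_apply]
  have key : ∀ m : ZMod n, A j m * Aᵀ m l =
      1 - 2 * (if m - j ∈ S then (1:ℤ) else 0) - 2 * (if m - l ∈ S then (1:ℤ) else 0)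
        + 4 * (if m - j ∈ S ∧ m - l ∈ S then (1:ℤ) else 0) := by
    intro m
    rw [Matrix.transpose_apply, hA, hA]
    by_cases h1 : m - j ∈ S <;> by_cases h2 : m - l ∈ S <;>
      simp [h1, h2] <;> ring
  simp_rw [key]
  rw [Finset.sum_add_distrib, Finset.sum_sub_distrib, Finset.sum_sub_distrib,
    Finset.sum_const, ← Finset.mul_sum, ← Finset.mul_sum, ← Finset.mul_sum,
    Finset.sum_boole, Finset.sum_boole, Finset.sum_boole]
  simp only [Finset.card_univ, ZMod.card, nsmul_eq_mul, mul_one]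
  rw [count_one S j, count_one S l, count_both S j l]
  push_cast
  ring

private lemma diag_count (S : Finset (ZMod n)) :
    ((S ×ˢ S).filter (fun p => p.1 - p.2 = (0 : ZMod n))).card = S.card := by
  apply Finset.card_bij (fun p _ => p.1)
  · intro p hp
    simp only [Finset.mem_filter, Finset.mem_product] at hp
    exact hp.1.1
  · intro a ha b hb h
    simp only [Finset.mem_filter, Finset.mem_product, sub_eq_zero] at ha hb
    ext
    · exact h
    · rw [← ha.2, ← hb.2, h]
  · intro r hr
    exact ⟨(r, r), by simp [Finset.mem_filter, hr], rfl⟩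

theorem sds_goethals_seidel_condition (n lam : ℕ) [NeZero n]
    (S₁ S₂ S₃ S₄ : Finset (ZMod n))
    (hlam : S₁.card + S₂.card + S₃.card + S₄.card = n + lam)
    (hsds : ∀ g : ZMod n, g ≠ 0 →
      ((S₁ ×ˢ S₁).filter (fun p => p.1 - p.2 = g)).card +
      ((S₂ ×ˢ S₂).filter (fun p => p.1 - p.2 = g)).card +
      ((S₃ ×ˢ S₃).filter (fun p => p.1 - p.2 = g)).card +
      ((S₄ ×ˢ S₄).filter (fun p => p.1 - p.2 = g)).card = lam)
    (A₁ A₂ A₃ A₄ : Matrix (ZMod n) (ZMod n) ℤ)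
    (hA₁ : ∀ j l, A₁ j l = if l - j ∈ S₁ then -1 else 1)
    (hA₂ : ∀ j l, A₂ j l = if l - j ∈ S₂ then -1 else 1)
    (hA₃ : ∀ j l, A₃ j l = if l - j ∈ S₃ then -1 else 1)
    (hA₄ : ∀ j l, A₄ j l = if l - j ∈ S₄ then -1 else 1) :
    A₁ * A₁ᵀ + A₂ * A₂ᵀ + A₃ * A₃ᵀ + A₄ * A₄ᵀ = ((4 * n : ℕ) : ℤ) • 1 := by
  ext j l
  simp only [Matrix.add_apply, Matrix.smul_apply, Matrix.one_apply, smul_eq_mul]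
  rw [entry_eq S₁ A₁ hA₁ j l, entry_eq S₂ A₂ hA₂ j l,
    entry_eq S₃ A₃ hA₃ j l, entry_eq S₄ A₄ hA₄ j l]
  by_cases hjl : j = l
  · subst hjl
    simp only [sub_self, if_true]
    rw [diag_count, diag_count, diag_count, diag_count]
    push_cast
    ring
  · rw [if_neg hjl]
    have hg : l - j ≠ 0 := sub_ne_zero.mpr (Ne.symm hjl)
    have h1 := hsds (l - j) hg
    have h2 : ((S₁.card : ℤ) + S₂.card + S₃.card + S₄.card) = (n : ℤ) + lam := by
      exact_mod_cast hlam
    have h3 : (((S₁ ×ˢ S₁).filter (fun p => p.1 - p.2 = l - j)).card : ℤ) +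
      ((S₂ ×ˢ S₂).filter (fun p => p.1 - p.2 = l - j)).card +
      ((S₃ ×ˢ S₃).filter (fun p => p.1 - p.2 = l - j)).card +
      ((S₄ ×ˢ S₄).filter (fun p => p.1 - p.2 = l - j)).card = (lam : ℤ) := by
      exact_mod_cast h1
    linarith
end
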